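/- arXiv:1511.05657 — 5 statements merged into one kernel-verified Lean document; each statement's English description precedes it below -/
import Mathlib

section
/- If a finite Borel measure μ on ℝ fails the Steinhaus property, then there exists a compact set A ⊆ ℝ with μ(A) > 0 and Lebesgue measure m(A) = 0. -/
open MeasureTheory Set Pointwise

def HasSP (μ : Measure ℝ) : Prop :=
  ∀ A : Set ℝ, MeasurableSet A → 0 < μ A → ∃ ε > 0, Set.Ioo (-ε) ε ⊆ A - A

/-! By the Steinhaus theorem every measure absolutely continuous with respect to Lebesgue measure
has the Steinhaus property. So if `μ` fails it, some Lebesgue-null set `N` has `μ N > 0`; since a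
finite Borel measure on `ℝ` is inner regular, a compact subset of a measurable null hull of `N`
still has positive `μ`-measure. -/

theorem MeasureTheory.Measure.absolutelyContinuous_of_isCompact {α : Type*} [MeasurableSpace α]
    [TopologicalSpace α] {μ ν : Measure α} [μ.InnerRegular]
    (h : ∀ K, IsCompact K → ν K = 0 → μ K = 0) : μ ≪ ν := by
  intro N hN
  by_contra hμN
  obtain ⟨K, hKN, hK, hμK⟩ := (measurableSet_toMeasurable ν N).exists_lt_isCompact
    ((pos_iff_ne_zero.2 hμN).trans_le (measure_mono (subset_toMeasurable ν N)))
  exact hμK.ne' (h K hK (measure_mono_null hKN (measure_toMeasurable N ▸ hN)))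

theorem hasSP_of_absolutelyContinuous {μ : Measure ℝ} (hμ : μ ≪ volume) : HasSP μ := by
  intro A hA hμA
  have hA_ne_zero : volume A ≠ 0 := fun h ↦ hμA.ne' (hμ h)
  obtain ⟨ε, hε, hball⟩ := Metric.mem_nhds_iff.1
    (Measure.sub_mem_nhds_zero_of_addHaar_pos volume A hA (pos_iff_ne_zero.2 hA_ne_zero))
  refine ⟨ε, hε, ?_⟩
  simpa [Real.ball_eq_Ioo] using hball

theorem exists_compact_null_of_not_SP (μ : Measure ℝ) [IsFiniteMeasure μ]
    (h : ¬ HasSP μ) :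
    ∃ A : Set ℝ, IsCompact A ∧ 0 < μ A ∧ volume A = 0 := by
  by_contra! hK
  refine h (hasSP_of_absolutelyContinuous (Measure.absolutelyContinuous_of_isCompact ?_))
  intro K hK_compact hK_null
  by_contra hμK
  exact hK K hK_compact (pos_iff_ne_zero.2 hμK) hK_null
end

section
/- Let μ be a Borel measure on ℝ and suppose there is a Borel set A with μ(A) > 0 and a sequence (tₙ) of nonzero reals converging to 0 such that μ(A + tₙ) → 0. Then μ fails the Steinhaus property. -/
/-!
Pass to a subsequence `s k = t (φ k)` along which `∑ μ (A + s k) < μ A`. Then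
`B = A \ ⋃ k, (A + s k)` still has positive measure, and no `s k` lies in `B - B`:
if `x - y = s k` with `x, y ∈ B`, then `x = y + s k ∈ A + s k`. As `s k → 0`,
`B - B` contains no interval around `0`.
-/

open MeasureTheory Set Pointwise Filter

open scoped ENNReal Topology

theorem exists_strictMono_tsum_lt_of_tendsto_zero {u : ℕ → ℝ≥0∞}
    (hu : Tendsto u atTop (𝓝 0)) {c : ℝ≥0∞} (hc : c ≠ 0) :
    ∃ φ : ℕ → ℕ, StrictMono φ ∧ ∑' k, u (φ k) < c := by
  obtain ⟨ε, hε, hεc⟩ := ENNReal.exists_pos_sum_of_countable' hc ℕ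
  obtain ⟨φ, hφ, huε⟩ :=
    extraction_forall_of_eventually fun k => hu.eventually_lt_const (hε k)
  exact ⟨φ, hφ, (ENNReal.tsum_le_tsum fun k => (huε k).le).trans_lt hεc⟩

theorem measure_diff_iUnion_pos_of_tsum_lt {α ι : Type*} [MeasurableSpace α] [Countable ι]
    {μ : Measure α} {A : Set α} {S : ι → Set α} (h : ∑' i, μ (S i) < μ A) :
    0 < μ (A \ ⋃ i, S i) :=
  (tsub_pos_of_lt ((measure_iUnion_le S).trans_lt h)).trans_le le_measure_sdiff

theorem notMem_sub_of_subset_diff_image_add_right {G : Type*} [AddCommGroup G]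
    {A B : Set G} {s : G} (hB : B ⊆ A \ (· + s) '' A) : s ∉ B - B := by
  rintro ⟨x, hx, y, hy, hxy⟩
  exact (hB hx).2 ⟨y, (hB hy).1, by simp only [← hxy, add_sub_cancel]⟩

theorem not_hasSP_of_tendsto_notMem_sub {μ : Measure ℝ} {B : Set ℝ} (hB : MeasurableSet B)
    (hμB : 0 < μ B) {ι : Type*} {l : Filter ι} [l.NeBot] {s : ι → ℝ}
    (hs : Tendsto s l (𝓝 0)) (hsB : ∀ i, s i ∉ B - B) : ¬ HasSP μ := fun hSP => by
  obtain ⟨ε, hε, hεB⟩ := hSP B hB hμB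
  obtain ⟨i, hi⟩ := (hs.eventually (Ioo_mem_nhds (neg_neg_iff_pos.2 hε) hε)).exists
  exact hsB i (hεB hi)

theorem not_SP_of_translates_measure_tendsto_zero_general (μ : Measure ℝ)
    (A : Set ℝ) (hA : MeasurableSet A) (hpos : 0 < μ A)
    (t : ℕ → ℝ) (ht : Tendsto t atTop (nhds 0))
    (hμt : Tendsto (fun n => μ ((fun a => a + t n) '' A)) atTop (nhds 0)) :
    ¬ HasSP μ := by
  obtain ⟨φ, hφ, hsum⟩ := exists_strictMono_tsum_lt_of_tendsto_zero hμt hpos.ne'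
  have hB : MeasurableSet (A \ ⋃ k, (· + t (φ k)) '' A) := by
    refine hA.diff (.iUnion fun k => ?_)
    rw [image_add_right]
    exact measurable_add_const _ hA
  exact not_hasSP_of_tendsto_notMem_sub hB (measure_diff_iUnion_pos_of_tsum_lt hsum)
    (ht.comp hφ.tendsto_atTop) fun k => notMem_sub_of_subset_diff_image_add_right
      (sdiff_subset_sdiff_right (subset_iUnion (fun j => (· + t (φ j)) '' A) k))

theorem not_SP_of_translates_measure_tendsto_zero (μ : Measure ℝ)
    (A : Set ℝ) (hA : MeasurableSet A) (hpos : 0 < μ A)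
    (t : ℕ → ℝ) (ht0 : ∀ n, t n ≠ 0) (ht : Tendsto t atTop (nhds 0))
    (hμt : Tendsto (fun n => μ ((fun a => a + t n) '' A)) atTop (nhds 0)) :
    ¬ HasSP μ :=
  not_SP_of_translates_measure_tendsto_zero_general μ A hA hpos t ht hμt
end

section
/- A finite Borel measure μ on ℝ has the Steinhaus property if and only if μ is absolutely continuous with respect to Lebesgue measure. -/
open MeasureTheory Set Pointwise

open Filter Topology

/-! If `μ` charges a Lebesgue-null set `A`, Fubini gives `μ (A ∩ (-t + A)) = 0` for almost
every `t`, hence along a sequence `tₙ → 0`. Removing these `μ`-null pieces from `A` leaves a set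
`B` of positive `μ`-measure such that no `tₙ` lies in `B - B`. The converse is Steinhaus' theorem
for Lebesgue measure. -/

section

variable {G : Type*} [AddGroup G] [MeasurableSpace G] [MeasurableAdd₂ G]

theorem ae_measure_inter_preimage_const_add_eq_zero
    (μ ν : Measure G) [SFinite μ] [SFinite ν] [ν.IsAddRightInvariant]
    {A : Set G} (hA : MeasurableSet A) (hνA : ν A = 0) :
    ∀ᵐ t ∂ν, μ (A ∩ (t + ·) ⁻¹' A) = 0 := by
  have hmeas : MeasurableSet {p : G × G | p.1 ∈ A → p.2 + p.1 ∉ A} :=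
    (measurable_fst hA).himp (measurable_snd.add measurable_fst hA).compl
  have hsections : ∀ᵐ x ∂μ, ∀ᵐ t ∂ν, x ∈ A → t + x ∉ A := by
    refine ae_of_all _ fun x => ?_
    have hνx : ν ((· + x) ⁻¹' A) = 0 := by rw [measure_preimage_add_right, hνA]
    filter_upwards [measure_eq_zero_iff_ae_notMem.1 hνx] with t ht _ using ht
  filter_upwards [(Measure.ae_ae_comm hmeas).1 hsections] with t ht
  rw [measure_eq_zero_iff_ae_notMem]
  filter_upwards [ht] with x hx ⟨hxA, hxtA⟩ using hx hxA hxtA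

variable [TopologicalSpace G] [FirstCountableTopology G]

theorem exists_sub_notMem_nhds_zero_of_not_absolutelyContinuous
    {μ : Measure G} (ν : Measure G) [SFinite μ] [SFinite ν] [ν.IsAddRightInvariant]
    [ν.IsOpenPosMeasure] (hμν : ¬ μ ≪ ν) :
    ∃ B, MeasurableSet B ∧ 0 < μ B ∧ B - B ∉ 𝓝 0 := by
  obtain ⟨A₀, hνA₀, hμA₀⟩ : ∃ A₀, ν A₀ = 0 ∧ μ A₀ ≠ 0 := by
    simpa [Measure.AbsolutelyContinuous] using hμν
  obtain ⟨A, hA₀A, hA, hνA⟩ := exists_measurable_superset_of_null hνA₀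
  have hdense := Measure.dense_of_ae (ae_measure_inter_preimage_const_add_eq_zero μ ν hA hνA)
  obtain ⟨t, ht, ht_lim⟩ : ∃ t : ℕ → G,
      (∀ n, μ (A ∩ (t n + ·) ⁻¹' A) = 0) ∧ Tendsto t atTop (𝓝 0) :=
    mem_closure_iff_seq_limit.1 (hdense.closure_eq ▸ mem_univ 0)
  set B := A \ ⋃ n, A ∩ (t n + ·) ⁻¹' A
  have hB : MeasurableSet B := hA.diff (.iUnion fun n => hA.inter (measurable_const_add (t n) hA))
  refine ⟨B, hB, ?_, fun hBB => ?_⟩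
  · rw [measure_sdiff_null (measure_iUnion_null ht)]
    exact pos_of_ne_zero fun h => hμA₀ (measure_mono_null hA₀A h)
  · obtain ⟨n, b, hb, b', hb', hbb'⟩ := (ht_lim.eventually hBB).exists
    exact hb'.2 <| mem_iUnion.2 ⟨n, hb'.1, by simpa [← hbb'] using hb.1⟩

end

theorem hasSP_iff_sub_mem_nhds_zero (μ : Measure ℝ) :
    HasSP μ ↔ ∀ A, MeasurableSet A → 0 < μ A → A - A ∈ 𝓝 0 := by
  simp only [HasSP, Metric.mem_nhds_iff, Real.ball_zero_eq_Ioo]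

theorem SP_iff_absolutelyContinuous (μ : Measure ℝ) [IsFiniteMeasure μ] :
    HasSP μ ↔ μ ≪ (volume : Measure ℝ) := by
  rw [hasSP_iff_sub_mem_nhds_zero]
  refine ⟨fun hSP => ?_, fun hμ A hA hμA => ?_⟩
  · by_contra hμ
    obtain ⟨B, hB, hμB, hBB⟩ :=
      exists_sub_notMem_nhds_zero_of_not_absolutelyContinuous volume hμ
    exact hBB (hSP B hB hμB)
  · have hA_pos : 0 < volume A := pos_of_ne_zero (mt (@hμ A) hμA.ne')
    exact Measure.sub_mem_nhds_zero_of_addHaar_pos volume A hA hA_pos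
end

section
/- For a finite Borel measure μ on ℝ with compact support, the following are equivalent: (1) μ fails the Steinhaus property; (2) there is a compact set A with μ(A) > 0 and m(A) = 0; (3) there is a compact set A with μ(A) > 0 and a sequence of nonzero reals tₙ → 0 with μ(A + tₙ) → 0. -/
/-!
If `μ` fails the Steinhaus property on some `A`, then `A` is Lebesgue-null by Steinhaus' theorem
for Lebesgue measure, and inner regularity shrinks `A` to a compact set. If `A` is Lebesgue-null,
Fubini shows that `μ (A + t) = 0` for almost every `t`, so such `t` accumulate at `0`. Conversely,
given translates `A + tₙ` of small `μ`-measure with `tₙ → 0`, pass to a subsequence along which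
these measures have sum `< μ A`, and remove all of the translates from `A`: the rest `B` still has
positive measure, while no `tₙ` lies in `B - B`.
-/

open MeasureTheory Set Pointwise Filter

open Topology

theorem hasSP_volume : HasSP volume := fun A hA hpos => by
  obtain ⟨ε, hε, hball⟩ :=
    Metric.mem_nhds_iff.1 (volume.sub_mem_nhds_zero_of_addHaar_pos A hA hpos)
  exact ⟨ε, hε, by simpa [Real.ball_eq_Ioo] using hball⟩

theorem exists_isCompact_volume_eq_zero_of_not_hasSP {μ : Measure ℝ} [μ.InnerRegular]
    (h : ¬HasSP μ) : ∃ A : Set ℝ, IsCompact A ∧ 0 < μ A ∧ volume A = 0 := by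
  obtain ⟨A, hA, hpos, hA_not⟩ :
      ∃ A, MeasurableSet A ∧ 0 < μ A ∧ ¬∃ ε > 0, Ioo (-ε) ε ⊆ A - A := by
    simpa [HasSP] using h
  have hvol : volume A = 0 := by
    by_contra hne
    exact hA_not (hasSP_volume A hA (pos_iff_ne_zero.2 hne))
  obtain ⟨L, hLA, hL, hLpos⟩ := hA.exists_lt_isCompact hpos
  exact ⟨L, hL, hLpos, measure_mono_null hLA hvol⟩

theorem ae_measure_image_add_right_eq_zero {G : Type*} [MeasurableSpace G] [AddGroup G]
    [MeasurableAdd₂ G] [MeasurableNeg G] (μ ν : Measure G) [SFinite μ] [SFinite ν]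
    [ν.IsAddLeftInvariant] [ν.IsNegInvariant] {A : Set G} (hA : MeasurableSet A)
    (hνA : ν A = 0) : ∀ᵐ t ∂ν, μ ((· + t) '' A) = 0 := by
  have hmeas : MeasurableSet {p : G × G | p.1 - p.2 ∉ A} :=
    (hA.preimage (measurable_fst.sub measurable_snd)).compl
  have hx : ∀ x, ∀ᵐ t ∂ν, x - t ∉ A := fun x => by
    rw [ae_iff]
    simp only [not_not]
    exact ((ν.measurePreserving_sub_left x).measure_preimage hA.nullMeasurableSet).trans hνA
  filter_upwards [(Measure.ae_ae_comm hmeas).1 (ae_of_all μ hx)] with t ht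
  rw [ae_iff] at ht
  simp only [not_not, sub_eq_add_neg] at ht
  rwa [image_add_right]

theorem exists_seq_ne_tendsto_forall_of_ae {X : Type*} [TopologicalSpace X]
    [FirstCountableTopology X] [MeasurableSpace X] {μ : Measure X} [μ.IsOpenPosMeasure]
    [NullSingletonClass μ] {p : X → Prop} (h : ∀ᵐ y ∂μ, p y) (x : X) :
    ∃ u : ℕ → X, (∀ n, u n ≠ x) ∧ Tendsto u atTop (𝓝 x) ∧ ∀ n, p (u n) := by
  have hne : ∀ᵐ y ∂μ, y ≠ x ∧ p y := (ae_iff.2 (by simp)).and h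
  have hfreq : ∃ᶠ y in 𝓝 x, y ≠ x ∧ p y := fun hev =>
    (μ.measure_pos_of_mem_nhds hev).ne' (ae_iff.1 hne)
  obtain ⟨u, hu, hup⟩ := frequently_iff_seq_forall.1 hfreq
  exact ⟨u, fun n => (hup n).1, hu, fun n => (hup n).2⟩

theorem notMem_sub_self_of_disjoint_image_add_right {G : Type*} [AddCommGroup G] {A B : Set G}
    {t : G} (hBA : B ⊆ A) (hdisj : Disjoint B ((· + t) '' A)) : t ∉ B - B := by
  rintro ⟨x, hx, y, hy, hxy⟩
  exact hdisj.notMem_of_mem_left hx ⟨y, hBA hy, by rw [← hxy]; exact add_sub_cancel y x⟩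

theorem not_hasSP_of_tendsto_measure_image_add_right {μ : Measure ℝ} {A : Set ℝ}
    (hA : MeasurableSet A) (hpos : 0 < μ A) {t : ℕ → ℝ} (ht : Tendsto t atTop (𝓝 0))
    (hμt : Tendsto (fun n => μ ((· + t n) '' A)) atTop (𝓝 0)) : ¬HasSP μ := by
  obtain ⟨δ, hδpos, hδsum⟩ := ENNReal.exists_pos_sum_of_countable hpos.ne' ℕ
  have hsel : ∀ k, ∃ n, k ≤ n ∧ μ ((· + t n) '' A) < δ k := fun k =>
    ((eventually_ge_atTop k).and (hμt.eventually_lt_const (by simpa using hδpos k))).exists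
  choose s hs hμs using hsel
  set U := ⋃ k, (· + t (s k)) '' A
  have hU : MeasurableSet U := MeasurableSet.iUnion fun k =>
    (measurableEmbedding_addRight (t (s k))).measurableSet_image.2 hA
  have hμU : μ U < μ A := calc
    μ U ≤ ∑' k, μ ((· + t (s k)) '' A) := measure_iUnion_le _
    _ ≤ ∑' k, (δ k : ENNReal) := ENNReal.tsum_le_tsum fun k => (hμs k).le
    _ < μ A := hδsum
  have hB : 0 < μ (A \ U) := (tsub_pos_of_lt hμU).trans_le le_measure_sdiff
  intro hSP
  obtain ⟨ε, hε, hsub⟩ := hSP (A \ U) (hA.diff hU) hB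
  have hts : Tendsto (fun k => t (s k)) atTop (𝓝 0) := ht.comp (tendsto_atTop_mono hs tendsto_id)
  obtain ⟨k, hk⟩ := (hts.eventually (Ioo_mem_nhds (neg_neg_of_pos hε) hε)).exists
  exact notMem_sub_self_of_disjoint_image_add_right sdiff_subset
    (disjoint_sdiff_left.mono_right (subset_iUnion (fun k => (· + t (s k)) '' A) k)) (hsub hk)

theorem not_SP_tfae_general (μ : Measure ℝ) [IsFiniteMeasure μ] :
    ((¬ HasSP μ) ↔ ∃ A : Set ℝ, IsCompact A ∧ 0 < μ A ∧ volume A = 0) ∧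
    ((¬ HasSP μ) ↔ ∃ A : Set ℝ, IsCompact A ∧ 0 < μ A ∧
        ∃ t : ℕ → ℝ, (∀ n, t n ≠ 0) ∧ Tendsto t atTop (nhds 0) ∧
          Tendsto (fun n => μ ((fun a => a + t n) '' A)) atTop (nhds 0)) := by
  have h12 := exists_isCompact_volume_eq_zero_of_not_hasSP (μ := μ)
  have h23 : (∃ A : Set ℝ, IsCompact A ∧ 0 < μ A ∧ volume A = 0) →
      ∃ A : Set ℝ, IsCompact A ∧ 0 < μ A ∧
        ∃ t : ℕ → ℝ, (∀ n, t n ≠ 0) ∧ Tendsto t atTop (nhds 0) ∧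
          Tendsto (fun n => μ ((fun a => a + t n) '' A)) atTop (nhds 0) := by
    rintro ⟨A, hA, hpos, hvol⟩
    obtain ⟨t, ht0, ht, hμt⟩ := exists_seq_ne_tendsto_forall_of_ae
      (ae_measure_image_add_right_eq_zero μ volume hA.measurableSet hvol) 0
    exact ⟨A, hA, hpos, t, ht0, ht, by simpa only [hμt] using tendsto_const_nhds⟩
  have h31 : (∃ A : Set ℝ, IsCompact A ∧ 0 < μ A ∧
      ∃ t : ℕ → ℝ, (∀ n, t n ≠ 0) ∧ Tendsto t atTop (nhds 0) ∧
        Tendsto (fun n => μ ((fun a => a + t n) '' A)) atTop (nhds 0)) → ¬HasSP μ := by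
    rintro ⟨A, hA, hpos, t, -, ht, hμt⟩
    exact not_hasSP_of_tendsto_measure_image_add_right hA.measurableSet hpos ht hμt
  exact ⟨⟨h12, h31 ∘ h23⟩, ⟨h23 ∘ h12, h31⟩⟩

theorem not_SP_tfae (μ : Measure ℝ) [IsFiniteMeasure μ]
    (K : Set ℝ) (hK : IsCompact K) (hsupp : μ Kᶜ = 0) :
    ((¬ HasSP μ) ↔ ∃ A : Set ℝ, IsCompact A ∧ 0 < μ A ∧ volume A = 0) ∧
    ((¬ HasSP μ) ↔ ∃ A : Set ℝ, IsCompact A ∧ 0 < μ A ∧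
        ∃ t : ℕ → ℝ, (∀ n, t n ≠ 0) ∧ Tendsto t atTop (nhds 0) ∧
          Tendsto (fun n => μ ((fun a => a + t n) '' A)) atTop (nhds 0)) :=
  not_SP_tfae_general μ
end

section
/- Let μ be a finite Borel measure on ℝ (hence inner regular). Then μ fails the Steinhaus property if and only if there exist a compact set A with μ(A) > 0 and a sequence of nonzero reals tₙ → 0 with A ∩ (A + tₙ) = ∅ for all n. -/
open MeasureTheory Set Pointwise Filter

lemma mem_sub_iff_inter (A : Set ℝ) (t : ℝ) :
    t ∈ A - A ↔ (A ∩ ((fun a => a + t) '' A)).Nonempty := by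
  constructor
  · rw [Set.mem_sub]
    rintro ⟨a, ha, b, hb, rfl⟩
    exact ⟨a, ha, b, hb, by ring⟩
  · rintro ⟨x, hxA, b, hb, rfl⟩
    exact ⟨b + t, hxA, b, hb, by ring⟩

theorem not_SP_iff_compact (μ : Measure ℝ) [IsFiniteMeasure μ] :
    ¬ HasSP μ ↔
      ∃ A : Set ℝ, IsCompact A ∧ 0 < μ A ∧
        ∃ t : ℕ → ℝ, (∀ n, t n ≠ 0) ∧ Tendsto t atTop (nhds 0) ∧
          ∀ n, A ∩ ((fun a => a + t n) '' A) = ∅ := by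
  constructor
  · intro h
    unfold HasSP at h
    push_neg at h
    obtain ⟨A, hA, hμA, hno⟩ := h
    obtain ⟨K, hKA, hK, hμK⟩ :=
      hA.exists_lt_isCompact_of_ne_top (measure_ne_top μ A) hμA
    have hKne : K.Nonempty := nonempty_of_measure_ne_zero hμK.ne'
    have hzero : (0 : ℝ) ∈ K - K := by
      obtain ⟨x, hx⟩ := hKne
      exact ⟨x, hx, x, hx, sub_self x⟩
    -- For each n, find t ∈ Ioo with t ∉ K - K
    have key : ∀ n : ℕ, ∃ t : ℝ, t ∈ Set.Ioo (-(1 / (n + 1) : ℝ)) (1 / (n + 1)) ∧ t ∉ K - K := by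
      intro n
      have hε : (0 : ℝ) < 1 / (n + 1) := by positivity
      have := hno (1 / (n + 1)) hε
      rw [Set.not_subset] at this
      obtain ⟨t, ht, htn⟩ := this
      refine ⟨t, ht, fun hmem => htn ?_⟩
      exact Set.sub_subset_sub hKA hKA hmem
    choose t ht htn using key
    refine ⟨K, hK, hμK, t, ?_, ?_, ?_⟩
    · intro n hn
      exact htn n (hn ▸ hzero)
    · have h1 : Tendsto (fun n : ℕ => (1 / (n + 1) : ℝ)) atTop (nhds 0) :=
        tendsto_one_div_add_atTop_nhds_zero_nat
      have h2 : Tendsto (fun n : ℕ => -(1 / (n + 1) : ℝ)) atTop (nhds 0) := by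
        simpa using h1.neg
      exact tendsto_of_tendsto_of_tendsto_of_le_of_le h2 h1
        (fun n => (ht n).1.le) (fun n => (ht n).2.le)
    · intro n
      rw [← Set.not_nonempty_iff_eq_empty]
      intro hne
      exact htn n ((mem_sub_iff_inter K (t n)).2 hne)
  · rintro ⟨A, hA, hμA, t, htne, htlim, hdisj⟩
    intro h
    obtain ⟨ε, hε, hsub⟩ := h A hA.measurableSet hμA
    have : ∀ᶠ n in atTop, t n ∈ Set.Ioo (-ε) ε := by
      have := htlim (Ioo_mem_nhds (neg_lt_zero.2 hε) hε)
      exact this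
    obtain ⟨n, hn⟩ := this.exists
    have : t n ∈ A - A := hsub hn
    rw [mem_sub_iff_inter, hdisj n] at this
    exact this.ne_empty rfl
end
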